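/- arXiv:1504.05798 — 4 statements merged into one kernel-verified Lean document; each statement's English description precedes it below -/
import Mathlib

section
/- For every real v with 0 < v < 1 and every real x, the partial theta function satisfies the identity θ(-v, x) = θ(v^4, -x^2/v) - v·x·θ(v^4, -v·x^2). -/
/-!
Split the series for `θ(-v, x)` into its even- and odd-indexed terms. Since the exponent of `-v` is
the triangular number `T_j = j(j+1)/2`, and `T_{2k} = k(2k+1)`, `T_{2k+1} = (2k+1)(k+1)` differ from
`4 T_k` by linear terms in `k`, each half is again a partial theta series in `q = v⁴`, with the linear
parts of the exponents absorbed into the second argument.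
-/

/-- The partial theta function `θ(q,x) = ∑_{j=0}^∞ q^(j(j+1)/2) x^j`. -/
noncomputable def theta (q x : ℝ) : ℝ := ∑' j : ℕ, q ^ (j * (j + 1) / 2) * x ^ j

open Filter Topology

lemma two_mul_triangle (k : ℕ) : 2 * (k * (k + 1) / 2) = k * (k + 1) :=
  Nat.mul_div_cancel' (Nat.even_mul_succ_self k).two_dvd

lemma triangle_succ_eq_add (n : ℕ) : (n + 1) * (n + 1 + 1) / 2 = n * (n + 1) / 2 + (n + 1) := by
  rw [show (n + 1) * (n + 1 + 1) = n * (n + 1) + 2 * (n + 1) by ring,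
    Nat.add_mul_div_left _ _ two_pos]

lemma theta_summable {q : ℝ} (x : ℝ) (hq : |q| < 1) :
    Summable fun j : ℕ => q ^ (j * (j + 1) / 2) * x ^ j := by
  refine summable_of_ratio_norm_eventually_le one_half_lt_one ?_
  have hratio : Tendsto (fun n : ℕ => |q| ^ (n + 1) * |x|) atTop (𝓝 0) := by
    simpa using ((tendsto_pow_atTop_nhds_zero_of_lt_one (abs_nonneg q) hq).comp
      (tendsto_add_atTop_nat 1)).mul_const |x|
  filter_upwards [hratio.eventually (ge_mem_nhds one_half_pos)] with n hn
  calc ‖q ^ ((n + 1) * (n + 1 + 1) / 2) * x ^ (n + 1)‖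
      = |q| ^ (n + 1) * |x| * ‖q ^ (n * (n + 1) / 2) * x ^ n‖ := by
        simp only [triangle_succ_eq_add, norm_mul, norm_pow, Real.norm_eq_abs]
        ring
    _ ≤ 1 / 2 * ‖q ^ (n * (n + 1) / 2) * x ^ n‖ := by gcongr

lemma pow_four_pow_triangle (v : ℝ) (k : ℕ) :
    (v ^ 4) ^ (k * (k + 1) / 2) = v ^ (2 * (k * (k + 1))) := by
  rw [show v ^ 4 = (v ^ 2) ^ 2 by ring, ← pow_mul, two_mul_triangle, ← pow_mul]

lemma theta_term_even (v x : ℝ) (hv : v ≠ 0) (k : ℕ) :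
    (-v) ^ (2 * k * (2 * k + 1) / 2) * x ^ (2 * k) =
      (v ^ 4) ^ (k * (k + 1) / 2) * (-x ^ 2 / v) ^ k := by
  rw [mul_assoc, Nat.mul_div_cancel_left _ two_pos, pow_four_pow_triangle, mul_comm k, pow_mul,
    Odd.neg_pow (odd_two_mul_add_one k), div_pow, mul_div_assoc', eq_div_iff (pow_ne_zero k hv)]
  ring

lemma theta_term_odd (v x : ℝ) (k : ℕ) :
    (-v) ^ ((2 * k + 1) * (2 * k + 1 + 1) / 2) * x ^ (2 * k + 1) =
      -(v * x) * ((v ^ 4) ^ (k * (k + 1) / 2) * (-(v * x ^ 2)) ^ k) := by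
  rw [show (2 * k + 1) * (2 * k + 1 + 1) = 2 * ((2 * k + 1) * (k + 1)) by ring,
    Nat.mul_div_cancel_left _ two_pos, pow_four_pow_triangle, pow_mul,
    Odd.neg_pow (odd_two_mul_add_one k)]
  ring

theorem stmt_0 (v x : ℝ) (hv : 0 < v) (hv1 : v < 1) :
    theta (-v) x = theta (v ^ 4) (-x ^ 2 / v) - v * x * theta (v ^ 4) (-(v * x ^ 2)) := by
  have hs := theta_summable (q := -v) x (by rw [abs_neg, abs_of_pos hv]; exact hv1)
  have heven : Summable fun k : ℕ => (-v) ^ (2 * k * (2 * k + 1) / 2) * x ^ (2 * k) :=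
    hs.comp_injective (mul_right_injective₀ two_ne_zero)
  have hodd : Summable fun k : ℕ =>
      (-v) ^ ((2 * k + 1) * (2 * k + 1 + 1) / 2) * x ^ (2 * k + 1) :=
    hs.comp_injective fun a b h => by simpa using h
  have hsplit := tsum_even_add_odd (f := fun j : ℕ => (-v) ^ (j * (j + 1) / 2) * x ^ j) heven hodd
  rw [tsum_congr (theta_term_even v x hv.ne'), tsum_congr (theta_term_odd v x),
    tsum_mul_left] at hsplit
  unfold theta
  rw [← hsplit]
  ring
end

section
/- For every real q with -1 < q < 0, the set of negative real zeros of θ(q,·) is infinite and the set of positive real zeros of θ(q,·) is infinite. -/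
/-!
Iterating the functional equation `θ(x) = 1 + q x θ(q x)` gives
`q^(m choose 2) θ(x / q^m) = x^m (θ(x) + x⁻¹ ∑_{i<m} q^((i+1) choose 2) x^(-i))`,
and the bracket tends to `c(x) = θ(x) + x⁻¹ θ(x⁻¹)`. If `c(x₀) ≠ 0`, then `θ(x₀ / q^m)` and
`θ(x₀ / q^(m+2))` eventually have opposite signs, because `(m choose 2) + (m+2 choose 2)` is odd
and `q < 0`. Along even `m` the points `x₀ / q^m` tend to `+∞`, along odd `m` to `-∞`, so the
intermediate value theorem gives zeros of either sign and arbitrarily large modulus.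

Such an `x₀` exists: otherwise `θ(z) = -z⁻¹ θ(z⁻¹)` for `z > 0`, hence, by the identity theorem,
for every complex `z ≠ 0`. The entire extension of `θ` is then bounded by its bound on the unit
disc, so by Liouville it is constantly `θ(0) = 1`; but the relation at `z = 1` forces `θ(1) = 0`.
-/

open Filter Topology Set

lemma succ_choose_two (m : ℕ) : (m + 1).choose 2 = m.choose 2 + m := by
  rw [Nat.choose_succ_succ', Nat.choose_one_right, add_comm]

lemma odd_choose_two_add_add_two_choose_two (m : ℕ) : Odd (m.choose 2 + (m + 2).choose 2) :=
  ⟨m.choose 2 + m, by rw [succ_choose_two, succ_choose_two]; ring⟩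

lemma succ_choose_two_eq_mul_succ_div_two (j : ℕ) : (j + 1).choose 2 = j * (j + 1) / 2 := by
  rw [Nat.choose_two_right, Nat.add_sub_cancel, mul_comm]

section IntermediateValue

variable {α : Type*} [ConditionallyCompleteLinearOrder α] [TopologicalSpace α] [OrderTopology α]
  [DenselyOrdered α] {f : α → ℝ}

lemma exists_mem_uIcc_eq_zero_of_mul_nonpos (hf : Continuous f) {a b : α}
    (h : f a * f b ≤ 0) : ∃ z ∈ uIcc a b, f z = 0 :=
  intermediate_value_uIcc hf.continuousOn <| by
    rcases mul_nonpos_iff.mp h with h | h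
    · exact mem_uIcc.mpr (Or.inr h.symm)
    · exact mem_uIcc.mpr (Or.inl h)

lemma exists_gt_eq_zero_of_tendsto_atTop [NoMaxOrder α] (hf : Continuous f) {u : ℕ → α}
    (hu : Tendsto u atTop atTop) (hsign : ∀ᶠ k in atTop, f (u k) * f (u (k + 1)) ≤ 0) (B : α) :
    ∃ z, B < z ∧ f z = 0 := by
  obtain ⟨k, hk, hBk, hBk'⟩ := (hsign.and ((hu.eventually_gt_atTop B).and
    ((hu.comp (tendsto_add_atTop_nat 1)).eventually_gt_atTop B))).exists
  obtain ⟨z, hz, hz0⟩ := exists_mem_uIcc_eq_zero_of_mul_nonpos hf hk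
  exact ⟨z, (lt_min hBk hBk').trans_le hz.1, hz0⟩

lemma exists_lt_eq_zero_of_tendsto_atBot [NoMinOrder α] (hf : Continuous f) {u : ℕ → α}
    (hu : Tendsto u atTop atBot) (hsign : ∀ᶠ k in atTop, f (u k) * f (u (k + 1)) ≤ 0) (B : α) :
    ∃ z, z < B ∧ f z = 0 := by
  obtain ⟨k, hk, hBk, hBk'⟩ := (hsign.and ((hu.eventually_lt_atBot B).and
    ((hu.comp (tendsto_add_atTop_nat 1)).eventually_lt_atBot B))).exists
  obtain ⟨z, hz, hz0⟩ := exists_mem_uIcc_eq_zero_of_mul_nonpos hf hk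
  exact ⟨z, hz.2.trans_lt (max_lt hBk hBk'), hz0⟩

end IntermediateValue

lemma eqOn_compl_zero_of_forall_pos_real_eq {f g : ℂ → ℂ} (hf : AnalyticOnNhd ℂ f {0}ᶜ)
    (hg : AnalyticOnNhd ℂ g {0}ᶜ) (h : ∀ x : ℝ, 0 < x → f x = g x) : EqOn f g {0}ᶜ := by
  have hconn : IsPreconnected ({0}ᶜ : Set ℂ) :=
    (isConnected_compl_singleton_of_one_lt_rank (by simp) 0).isPreconnected
  have hofReal : Tendsto ((↑) : ℝ → ℂ) (𝓝[≠] 1) (𝓝[≠] 1) :=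
    tendsto_nhdsWithin_of_tendsto_nhds_of_eventually_within _
      (Complex.continuous_ofReal.tendsto' 1 1 Complex.ofReal_one |>.mono_left nhdsWithin_le_nhds)
      (eventually_nhdsWithin_of_forall fun x hx => by simpa using hx)
  have hpos : ∀ᶠ x : ℝ in 𝓝[≠] 1, f x = g x :=
    (eventually_gt_nhds one_pos).filter_mono nhdsWithin_le_nhds |>.mono fun x hx => h x hx
  exact hf.eqOn_of_preconnected_of_frequently_eq hg hconn (by simp)
    (hofReal.frequently hpos.frequently)

lemma summable_pow_choose_two_mul_pow {𝕜 : Type*} [NormedField 𝕜] [CompleteSpace 𝕜] {q : 𝕜}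
    (hq : ‖q‖ < 1) (z : 𝕜) :
    Summable fun j : ℕ => q ^ (j + 1).choose 2 * z ^ j := by
  refine summable_of_ratio_norm_eventually_le (r := 1 / 2) (by norm_num) ?_
  have hsmall : Tendsto (fun j : ℕ => ‖q‖ ^ (j + 1) * ‖z‖) atTop (𝓝 0) := by
    simpa using ((tendsto_pow_atTop_nhds_zero_of_lt_one (norm_nonneg q) hq).comp
      (tendsto_add_atTop_nat 1)).mul_const ‖z‖
  filter_upwards [hsmall.eventually (eventually_le_nhds (by norm_num : (0 : ℝ) < 1 / 2))]
    with j hj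
  have hterm : q ^ (j + 2).choose 2 * z ^ (j + 1) =
      q ^ (j + 1) * z * (q ^ (j + 1).choose 2 * z ^ j) := by
    rw [succ_choose_two, pow_add, pow_succ]; ring
  rw [hterm, norm_mul (q ^ (j + 1) * z), norm_mul, norm_pow]
  exact mul_le_mul_of_nonneg_right hj (norm_nonneg _)

-- `(j + 1).choose 2 = j (j + 1) / 2`, written so that Pascal's rule applies without `ℕ`-division.
noncomputable def partialTheta (q z : ℂ) : ℂ := ∑' j : ℕ, q ^ (j + 1).choose 2 * z ^ j

section Complex

variable {q : ℂ}

lemma partialTheta_zero (q : ℂ) : partialTheta q 0 = 1 := by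
  rw [partialTheta, tsum_eq_single 0 fun j hj => by simp [zero_pow hj]]
  simp

lemma partialTheta_eq_one_add (hq : ‖q‖ < 1) (z : ℂ) :
    partialTheta q z = 1 + q * z * partialTheta q (q * z) := by
  rw [partialTheta, (summable_pow_choose_two_mul_pow hq z).tsum_eq_zero_add, partialTheta,
    ← tsum_mul_left]
  congr 1
  · simp
  · refine tsum_congr fun j => ?_
    rw [succ_choose_two, pow_add, mul_pow, pow_succ]
    ring

lemma differentiable_partialTheta (hq : ‖q‖ < 1) : Differentiable ℂ (partialTheta q) := by
  intro z
  have hball : DifferentiableOn ℂ (partialTheta q) (Metric.ball 0 (‖z‖ + 1)) := by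
    refine Complex.differentiableOn_tsum_of_summable_norm
      (summable_pow_choose_two_mul_pow (q := ‖q‖) (by rwa [norm_norm]) (‖z‖ + 1))
      (fun j => ((differentiable_pow j).const_mul _).differentiableOn) Metric.isOpen_ball
      fun j w hw => ?_
    rw [mem_ball_zero_iff] at hw
    rw [norm_mul, norm_pow, norm_pow]
    gcongr
  exact hball.differentiableAt (Metric.isOpen_ball.mem_nhds (by simp))

lemma norm_partialTheta_le (hq : ‖q‖ < 1) {z : ℂ} (hz : ‖z‖ ≤ 1) :
    ‖partialTheta q z‖ ≤ ∑' j : ℕ, ‖q‖ ^ (j + 1).choose 2 := by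
  have hsum : Summable fun j : ℕ => ‖q ^ (j + 1).choose 2 * z ^ j‖ := by
    simpa only [norm_mul, norm_pow] using
      summable_pow_choose_two_mul_pow (q := ‖q‖) (by rwa [norm_norm]) ‖z‖
  refine (norm_tsum_le_tsum_norm hsum).trans (hsum.tsum_le_tsum (fun j => ?_) ?_)
  · rw [norm_mul, norm_pow, norm_pow]
    exact mul_le_of_le_one_right (by positivity) (pow_le_one₀ (norm_nonneg z) hz)
  · simpa using summable_pow_choose_two_mul_pow (q := ‖q‖) (by rwa [norm_norm]) 1

lemma partialTheta_eq_one_of_eqOn_inv (hq : ‖q‖ < 1)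
    (h : EqOn (partialTheta q) (fun z => -(z⁻¹ * partialTheta q z⁻¹)) {0}ᶜ) (z : ℂ) :
    partialTheta q z = 1 := by
  set C := ∑' j : ℕ, ‖q‖ ^ (j + 1).choose 2
  have hbound : ∀ w, ‖partialTheta q w‖ ≤ C := by
    intro w
    rcases le_or_gt ‖w‖ 1 with hw | hw
    · exact norm_partialTheta_le hq hw
    · have hw0 : w ≠ 0 := norm_pos_iff.mp (one_pos.trans hw)
      have hwinv : ‖w⁻¹‖ ≤ 1 := by rw [norm_inv]; exact inv_le_one_of_one_le₀ hw.le
      rw [h hw0, norm_neg, norm_mul]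
      exact (mul_le_mul hwinv (norm_partialTheta_le hq hwinv) (norm_nonneg _) zero_le_one).trans_eq
        (one_mul C)
  rw [(differentiable_partialTheta hq).apply_eq_apply_of_bounded
    (isBounded_iff_forall_norm_le.mpr ⟨C, forall_mem_range.mpr hbound⟩) z 0, partialTheta_zero]

end Complex

lemma theta_eq_tsum (q x : ℝ) : theta q x = ∑' j : ℕ, q ^ (j + 1).choose 2 * x ^ j := by
  simp only [theta, succ_choose_two_eq_mul_succ_div_two]

lemma ofReal_theta (q x : ℝ) : (theta q x : ℂ) = partialTheta q x := by
  rw [theta_eq_tsum, Complex.ofReal_tsum, partialTheta]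
  push_cast
  rfl

section Real

variable {q : ℝ}

lemma theta_eq_one_add (hq : |q| < 1) (x : ℝ) : theta q x = 1 + q * x * theta q (q * x) := by
  have h := partialTheta_eq_one_add (q := q) (by rwa [Complex.norm_real, Real.norm_eq_abs]) x
  rw [← Complex.ofReal_mul, ← ofReal_theta, ← ofReal_theta] at h
  exact_mod_cast h

lemma continuous_theta (hq : |q| < 1) : Continuous (theta q) := by
  have h : theta q = fun x : ℝ => (partialTheta q x).re := funext fun x => by
    rw [← ofReal_theta, Complex.ofReal_re]
  rw [h]
  exact Complex.continuous_re.comp ((differentiable_partialTheta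
    (by rwa [Complex.norm_real, Real.norm_eq_abs])).continuous.comp Complex.continuous_ofReal)

lemma theta_div_pow_mul_pow (hq : |q| < 1) (hq0 : q ≠ 0) {x : ℝ} (hx : x ≠ 0) (m : ℕ) :
    theta q (x / q ^ m) * q ^ m.choose 2 =
      x ^ m * (theta q x + x⁻¹ * ∑ i ∈ Finset.range m, q ^ (i + 1).choose 2 * x⁻¹ ^ i) := by
  induction m with
  | zero => simp
  | succ m ih =>
    have hstep : theta q (x / q ^ (m + 1)) = 1 + x / q ^ m * theta q (x / q ^ m) := by
      rw [theta_eq_one_add hq, pow_succ]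
      field_simp
    calc theta q (x / q ^ (m + 1)) * q ^ (m + 1).choose 2
        = q ^ (m + 1).choose 2 + x * (theta q (x / q ^ m) * q ^ m.choose 2) := by
          rw [hstep, succ_choose_two, pow_add]
          field_simp
      _ = _ := by
          rw [ih, Finset.sum_range_succ, inv_pow x m]
          field_simp
          ring

lemma exists_pos_theta_add_inv_mul_theta_inv_ne_zero (hq : |q| < 1) :
    ∃ x, 0 < x ∧ theta q x + x⁻¹ * theta q x⁻¹ ≠ 0 := by
  by_contra! h
  have hq' : ‖(q : ℂ)‖ < 1 := by rwa [Complex.norm_real, Real.norm_eq_abs]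
  have hdiff := differentiable_partialTheta hq'
  have hinv : DifferentiableOn ℂ (fun z : ℂ => z⁻¹) {0}ᶜ :=
    fun z hz => (differentiableAt_inv hz).differentiableWithinAt
  have heq : EqOn (partialTheta q) (fun z => -(z⁻¹ * partialTheta q z⁻¹)) {0}ᶜ := by
    refine eqOn_compl_zero_of_forall_pos_real_eq
      (hdiff.differentiableOn.analyticOnNhd isOpen_compl_singleton)
      ((hinv.mul (hdiff.comp_differentiableOn hinv)).neg.analyticOnNhd isOpen_compl_singleton)
      fun x hx => ?_
    rw [← Complex.ofReal_inv, ← ofReal_theta, ← ofReal_theta, eq_neg_iff_add_eq_zero]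
    exact_mod_cast h x hx
  have h1 : theta q 1 = 0 := by simpa using h 1 one_pos
  have := partialTheta_eq_one_of_eqOn_inv hq' heq 1
  rw [← Complex.ofReal_one, ← ofReal_theta, h1] at this
  simp at this

lemma eventually_theta_div_pow_mul_theta_div_pow_neg (hq₁ : -1 < q) (hq₂ : q < 0) {x : ℝ}
    (hx : 0 < x) (hc : theta q x + x⁻¹ * theta q x⁻¹ ≠ 0) :
    ∀ᶠ m in atTop, theta q (x / q ^ m) * theta q (x / q ^ (m + 2)) < 0 := by
  have hq : |q| < 1 := abs_lt.mpr ⟨hq₁, hq₂.trans one_pos⟩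
  set W : ℕ → ℝ :=
    fun m => theta q x + x⁻¹ * ∑ i ∈ Finset.range m, q ^ (i + 1).choose 2 * x⁻¹ ^ i
  have hW : Tendsto W atTop (𝓝 (theta q x + x⁻¹ * theta q x⁻¹)) := by
    rw [theta_eq_tsum q x⁻¹]
    exact ((summable_pow_choose_two_mul_pow (by rwa [Real.norm_eq_abs]) x⁻¹).hasSum
      |>.tendsto_sum_nat.const_mul x⁻¹).const_add _
  have hWW : ∀ᶠ m in atTop, 0 < W m * W (m + 2) :=
    (hW.mul (hW.comp (tendsto_add_atTop_nat 2))).eventually (lt_mem_nhds (mul_self_pos.mpr hc))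
  filter_upwards [hWW] with m hm
  have hodd : q ^ (m.choose 2 + (m + 2).choose 2) < 0 :=
    (odd_choose_two_add_add_two_choose_two m).pow_neg hq₂
  have hprod : 0 < theta q (x / q ^ m) * theta q (x / q ^ (m + 2)) *
      q ^ (m.choose 2 + (m + 2).choose 2) :=
    calc 0 < x ^ m * x ^ (m + 2) * (W m * W (m + 2)) := mul_pos (by positivity) hm
      _ = theta q (x / q ^ m) * q ^ m.choose 2 *
          (theta q (x / q ^ (m + 2)) * q ^ (m + 2).choose 2) := by
        rw [theta_div_pow_mul_pow hq hq₂.ne hx.ne' m,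
          theta_div_pow_mul_pow hq hq₂.ne hx.ne' (m + 2)]
        ring
      _ = _ := by rw [pow_add]; ring
  exact neg_of_mul_pos_left hprod hodd.le

lemma tendsto_div_pow_two_mul_atTop (hq₀ : q ≠ 0) (hq : |q| < 1) {x : ℝ} (hx : 0 < x) :
    Tendsto (fun k : ℕ => x / q ^ (2 * k)) atTop atTop := by
  have hq2 : 1 < (q ^ 2)⁻¹ :=
    one_lt_inv₀ (by positivity) |>.mpr (by rwa [sq_lt_one_iff_abs_lt_one])
  refine ((tendsto_pow_atTop_atTop_of_one_lt hq2).const_mul_atTop hx).congr fun k => ?_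
  rw [pow_mul, div_eq_mul_inv, inv_pow]

lemma tendsto_div_pow_two_mul_add_one_atBot (hq₁ : -1 < q) (hq₂ : q < 0) {x : ℝ} (hx : 0 < x) :
    Tendsto (fun k : ℕ => x / q ^ (2 * k + 1)) atTop atBot := by
  refine ((tendsto_div_pow_two_mul_atTop hq₂.ne (abs_lt.mpr ⟨hq₁, hq₂.trans one_pos⟩) hx)
    |>.atTop_div_const_of_neg hq₂).congr fun k => ?_
  rw [pow_succ, div_div]

end Real

theorem stmt_2 (q : ℝ) (hq₁ : -1 < q) (hq₂ : q < 0) :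
    {x : ℝ | x < 0 ∧ theta q x = 0}.Infinite ∧ {x : ℝ | 0 < x ∧ theta q x = 0}.Infinite := by
  have hq : |q| < 1 := abs_lt.mpr ⟨hq₁, hq₂.trans one_pos⟩
  obtain ⟨x₀, hx₀, hc⟩ := exists_pos_theta_add_inv_mul_theta_inv_ne_zero hq
  have hsign := eventually_theta_div_pow_mul_theta_div_pow_neg hq₁ hq₂ hx₀ hc
  have htwo : Tendsto (fun k : ℕ => 2 * k) atTop atTop :=
    tendsto_atTop_atTop.mpr fun b => ⟨b, fun k hk => by omega⟩
  constructor
  · refine infinite_of_forall_exists_lt fun B => ?_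
    obtain ⟨z, hz, hz0⟩ := exists_lt_eq_zero_of_tendsto_atBot (continuous_theta hq)
      (tendsto_div_pow_two_mul_add_one_atBot hq₁ hq₂ hx₀)
      ((htwo.eventually (tendsto_add_atTop_nat 1 |>.eventually hsign)).mono fun k hk => hk.le)
      (min B 0)
    exact ⟨z, ⟨hz.trans_le (min_le_right _ _), hz0⟩, hz.trans_le (min_le_left _ _)⟩
  · refine infinite_of_forall_exists_gt fun B => ?_
    obtain ⟨z, hz, hz0⟩ := exists_gt_eq_zero_of_tendsto_atTop (continuous_theta hq)
      (tendsto_div_pow_two_mul_atTop hq₂.ne hq hx₀)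
      ((htwo.eventually hsign).mono fun k hk => hk.le) (max B 0)
    exact ⟨z, ⟨(le_max_right _ _).trans_lt hz, hz0⟩, (le_max_left _ _).trans_lt hz⟩
end

section
/- For every real q with -1 < q < 0 one has θ(q, -1/q) < 0; consequently θ(q,·) has a zero in the open interval (0, -1/q). -/
open Filter Set

section ThetaAux


lemma tri_succ (j : ℕ) : (j+1) * ((j+1) + 1) / 2 = j * (j + 1) / 2 + (j+1) := by
  rw [show (j+1)*((j+1)+1) = j*(j+1) + 2*(j+1) by ring,
    Nat.add_mul_div_left _ _ (by norm_num)]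

lemma summable_theta' (q x : ℝ) (hq : |q| < 1) :
    Summable (fun j : ℕ => q ^ (j * (j + 1) / 2) * x ^ j) := by
  apply summable_of_ratio_norm_eventually_le (r := 1/2) (by norm_num)
  have h0 : Tendsto (fun j : ℕ => |q| ^ (j+1) * |x|) atTop (nhds 0) := by
    have h1 : Tendsto (fun j : ℕ => |q| ^ (j+1)) atTop (nhds 0) :=
      (tendsto_pow_atTop_nhds_zero_of_lt_one (abs_nonneg q) hq).comp
        (tendsto_add_atTop_nat 1)
    simpa using h1.mul_const |x|
  filter_upwards [h0.eventually_le_const (by norm_num : (0:ℝ) < 1/2)] with j hj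
  rw [tri_succ, pow_add, pow_succ]
  simp only [norm_mul, norm_pow, Real.norm_eq_abs, abs_pow]
  have h2 : (0:ℝ) ≤ |q| ^ (j * (j+1) / 2) * |x| ^ j :=
    mul_nonneg (pow_nonneg (abs_nonneg q) _) (pow_nonneg (abs_nonneg x) _)
  calc |q| ^ (j * (j+1) / 2) * |q| ^ (j+1) * (|x| ^ j * |x|)
      = (|q| ^ (j+1) * |x|) * (|q| ^ (j * (j+1) / 2) * |x| ^ j) := by ring
    _ ≤ (1/2) * (|q| ^ (j * (j+1) / 2) * |x| ^ j) := by
        apply mul_le_mul_of_nonneg_right hj h2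

lemma theta_funEq (q x : ℝ) (hq : |q| < 1) : theta q x = 1 + q * x * theta q (q * x) := by
  rw [theta, Summable.tsum_eq_zero_add (summable_theta' q x hq)]
  norm_num
  rw [theta, ← tsum_mul_left]
  apply tsum_congr
  intro j
  rw [tri_succ, pow_add, mul_pow, pow_succ]
  ring

lemma theta_zero (q : ℝ) : theta q 0 = 1 := by
  rw [theta, tsum_eq_single 0 (by intro j hj; simp [zero_pow hj])]
  norm_num

lemma theta_dist (q x : ℝ) (hq : |q| < 1) (hx : |x| < 1) :
    |theta q x - 1| ≤ |x| / (1 - |x|) := by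
  have hs := summable_theta' q x hq
  rw [theta, Summable.tsum_eq_zero_add hs]
  norm_num
  have hb : ∀ j : ℕ, ‖q ^ ((j+1) * ((j+1) + 1) / 2) * x ^ (j+1)‖ ≤ |x| ^ (j+1) := by
    intro j
    rw [Real.norm_eq_abs, abs_mul, abs_pow, abs_pow]
    have h1 : |q| ^ ((j+1) * ((j+1) + 1) / 2) ≤ 1 :=
      pow_le_one₀ (abs_nonneg q) hq.le
    nlinarith [pow_nonneg (abs_nonneg x) (j+1), pow_nonneg (abs_nonneg q) ((j+1) * ((j+1) + 1) / 2)]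
  have hgeo : Summable (fun j : ℕ => |x| ^ (j+1)) := by
    simp_rw [pow_succ']
    exact (summable_geometric_of_lt_one (abs_nonneg x) hx).mul_left _
  have hsum2 : Summable (fun j : ℕ => ‖q ^ ((j+1) * ((j+1) + 1) / 2) * x ^ (j+1)‖) :=
    Summable.of_nonneg_of_le (fun j => norm_nonneg _) hb hgeo
  calc |∑' j : ℕ, q ^ ((j+1) * ((j+1) + 1) / 2) * x ^ (j+1)|
      ≤ ∑' j : ℕ, ‖q ^ ((j+1) * ((j+1) + 1) / 2) * x ^ (j+1)‖ := by
        simpa using norm_tsum_le_tsum_norm hsum2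
    _ ≤ ∑' j : ℕ, |x| ^ (j+1) := Summable.tsum_le_tsum hb hsum2 hgeo
    _ = |x| / (1 - |x|) := by
        simp_rw [pow_succ']
        rw [tsum_mul_left, tsum_geometric_of_lt_one (abs_nonneg x) hx, div_eq_mul_inv]

lemma theta_contOn (q M : ℝ) (hq : |q| < 1) (hM : 0 ≤ M) :
    ContinuousOn (theta q) (Icc 0 M) := by
  have : ContinuousOn (fun x : ℝ => ∑' j : ℕ, q ^ (j * (j + 1) / 2) * x ^ j) (Icc 0 M) := by
    apply continuousOn_tsum (u := fun j : ℕ => |q| ^ (j * (j + 1) / 2) * M ^ j)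
    · intro i; exact (continuous_const.mul (continuous_pow i)).continuousOn
    · exact summable_theta' |q| M (by rwa [abs_abs])
    · intro j x hx
      rw [Real.norm_eq_abs, abs_mul, abs_pow, abs_pow]
      have h1 : |x| ≤ M := by rw [abs_of_nonneg hx.1]; exact hx.2
      exact mul_le_mul_of_nonneg_left (pow_le_pow_left₀ (abs_nonneg x) h1 j)
        (pow_nonneg (abs_nonneg q) _)
  exact this

end ThetaAux

set_option maxHeartbeats 1000000 in
theorem stmt_8 (q : ℝ) (hq₁ : -1 < q) (hq₂ : q < 0) :
    theta q (-1 / q) < 0 ∧ ∃ x ∈ Set.Ioo (0 : ℝ) (-1 / q), theta q x = 0 := by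
  obtain ⟨r, rfl⟩ : ∃ r : ℝ, q = -r := ⟨-q, (neg_neg q).symm⟩
  have hr0 : 0 < r := by linarith
  have hr1 : r < 1 := by linarith
  have hq0 : (-r : ℝ) ≠ 0 := by intro h; nlinarith
  have habs : |(-r : ℝ)| < 1 := by rw [abs_neg, abs_of_pos hr0]; exact hr1
  have hrp : ∀ m : ℕ, 0 < r ^ m := fun m => pow_pos hr0 m
  have hrle1 : ∀ m : ℕ, r ^ m ≤ 1 := fun m => pow_le_one₀ hr0.le hr1.le
  have hrlt1 : ∀ m : ℕ, m ≠ 0 → r ^ m < 1 := fun m hm => pow_lt_one₀ hr0.le hr1 hm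
  -- powers of -r
  have hpowE : ∀ m : ℕ, (-r) ^ (2*m) = r ^ (2*m) := fun m => Even.neg_pow ⟨m, by ring⟩ r
  have hpowO : ∀ m : ℕ, (-r) ^ (2*m+1) = -r ^ (2*m+1) := fun m => Odd.neg_pow ⟨m, by ring⟩ r
  -- the sequence s
  set s : ℕ → ℝ := fun k => theta (-r) (-(-r) ^ (2*k+1)) with hsdef
  have hrec : ∀ n : ℕ, theta (-r) (-(-r) ^ n) = 1 - (-r) ^ (n+1) * theta (-r) (-(-r) ^ (n+1)) := by
    intro n
    rw [theta_funEq (-r) (-(-r)^n) habs, show (-r) * -(-r)^n = -(-r)^(n+1) by ring]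
    ring
  have hsrec : ∀ k : ℕ, s k = 1 - r^(2*k+2) - r^(4*k+5) * s (k+1) := by
    intro k
    have h1 := hrec (2*k+1)
    have h2 := hrec (2*k+1+1)
    have e0 : (2*(k+1)+1) = (2*k+1+1+1) := by ring
    have eE : (-r) ^ (2*k+1+1) = r ^ (2*k+2) := by
      rw [show 2*k+1+1 = 2*(k+1) by ring]; exact hpowE (k+1)
    have eO : (-r) ^ (2*k+1+1+1) = -r ^ (2*k+3) := by
      rw [show 2*k+1+1+1 = 2*(k+1)+1 by ring]; exact hpowO (k+1)
    simp only [hsdef, e0]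
    rw [h1, h2, eE, eO]
    ring
  -- the comparison sequence A
  set A : ℕ → ℝ := fun k => (1 - r^(2*k)) / (1 + r^(4*k+1)) with hAdef
  have hA1 : ∀ k : ℕ, A (k+1) = (1 - r^(2*k+2)) / (1 + r^(4*k+5)) := by
    intro k
    simp only [hAdef]
    rw [show 2*(k+1) = 2*k+2 by ring, show 4*(k+1)+1 = 4*k+5 by ring]
  have hAnonneg : ∀ k, 0 ≤ A k := by
    intro k
    apply div_nonneg (by linarith [hrle1 (2*k)]) (by linarith [hrp (4*k+1)])
  -- step up
  have hstep_up : ∀ k : ℕ, A (k+1) ≤ s (k+1) → s k ≤ A (k+1) := by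
    intro k h
    rw [hsrec k, hA1 k]
    have hd : (0:ℝ) < 1 + r^(4*k+5) := by linarith [hrp (4*k+5)]
    rw [le_div_iff₀ hd]
    have h' : (1 - r^(2*k+2)) ≤ s (k+1) * (1 + r^(4*k+5)) := by
      rw [hA1 k] at h
      calc (1 - r^(2*k+2)) = (1 - r^(2*k+2)) / (1 + r^(4*k+5)) * (1 + r^(4*k+5)) := by
            field_simp
        _ ≤ s (k+1) * (1 + r^(4*k+5)) := mul_le_mul_of_nonneg_right h hd.le
    nlinarith [hrp (4*k+5)]
  -- step down, via the key polynomial inequality W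
  have hstep_down : ∀ k : ℕ, s (k+1) ≤ A (k+2) → A k ≤ s k := by
    intro k h
    have hW : A k + r^(4*k+5) * A (k+2) ≤ 1 - r^(2*k+2) := by
      have hA2 : A (k+2) = (1 - r^(2*k)*r^4) / (1 + (r^(2*k))^2*r^9) := by
        simp only [hAdef]
        rw [show 2*(k+2) = 2*k+4 by ring, show 4*(k+2)+1 = 4*k+9 by ring,
          show r^(2*k+4) = r^(2*k)*r^4 by rw [← pow_add],
          show r^(4*k+9) = (r^(2*k))^2*r^9 by rw [← pow_mul, ← pow_add]; congr 1; omega]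
      have hAk : A k = (1 - r^(2*k)) / (1 + (r^(2*k))^2*r) := by
        simp only [hAdef]
        rw [show r^(4*k+1) = (r^(2*k))^2*r by rw [← pow_mul, ← pow_succ]; congr 1; omega]
      have e3 : r^(4*k+5) = (r^(2*k))^2*r^5 := by
        rw [← pow_mul, ← pow_add]; congr 1; omega
      have e2 : r^(2*k+2) = r^(2*k)*r^2 := by rw [← pow_add]
      rw [hA2, hAk, e3, e2]
      have ha0 : 0 < r^(2*k) := hrp (2*k)
      have ha1 : r^(2*k) ≤ 1 := hrle1 (2*k)
      generalize r^(2*k) = a at ha0 ha1 ⊢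
      have hd1 : (0:ℝ) < 1 + a^2*r := by nlinarith
      have hd2 : (0:ℝ) < 1 + a^2*r^9 := by nlinarith [hrp 9]
      have ha3 : a^3 ≤ 1 := pow_le_one₀ ha0.le ha1
      have ha2 : a^2 ≤ 1 := pow_le_one₀ ha0.le ha1
      have c1 : (0:ℝ) ≤ 1 - a^3*r^6 - a^2*r^7*(1-r^2) := by
        have t1 : a^3*r^6 ≤ r^6 := by nlinarith [hrp 6]
        have t2 : a^2*r^7*(1-r^2) ≤ 1-r^2 := by
          have : a^2*r^7 ≤ 1 := by nlinarith [hrp 7, hrle1 7]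
          nlinarith [hrle1 2]
        have t3 : r^6 ≤ r^2 := by nlinarith [hrp 2, hrle1 4, hrp 4]
        linarith
      have c2 : (0:ℝ) ≤ (1 - a*r^2)*(a*r)*(1+r^2-a^2*r^7) := by
        have h1 : (0:ℝ) ≤ 1 - a*r^2 := by nlinarith [hrle1 2]
        have h2 : (0:ℝ) ≤ a*r := mul_nonneg ha0.le hr0.le
        have h3 : (0:ℝ) ≤ 1+r^2-a^2*r^7 := by
          nlinarith [mul_le_mul ha2 (hrle1 7) (hrp 7).le zero_le_one, hrp 2]
        exact mul_nonneg (mul_nonneg h1 h2) h3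
      have hprod : (0:ℝ) ≤ a*(1-r^2)*((1 - a^3*r^6 - a^2*r^7*(1-r^2)) + (1-a*r^2)*(a*r)*(1+r^2 - a^2*r^7)) :=
        mul_nonneg (mul_nonneg ha0.le (by nlinarith [hrle1 2])) (add_nonneg c1 c2)
      have hid : (1-a*r^2)*((1+a^2*r)*(1+a^2*r^9)) - ((1-a)*(1+a^2*r^9) + a^2*r^5*(1-a*r^4)*(1+a^2*r))
          = a*(1-r^2)*((1 - a^3*r^6 - a^2*r^7*(1-r^2)) + (1-a*r^2)*(a*r)*(1+r^2 - a^2*r^7)) := by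
        ring
      rw [← mul_div_assoc, div_add_div _ _ hd1.ne' hd2.ne', div_le_iff₀ (mul_pos hd1 hd2)]
      linarith [hid, hprod]
    have hs1 : r^(4*k+5) * s (k+1) ≤ r^(4*k+5) * A (k+2) :=
      mul_le_mul_of_nonneg_left h (hrp (4*k+5)).le
    rw [hsrec k]
    linarith
  -- distance of s k from 1
  have habsx : ∀ m : ℕ, |(-(-r)^(2*m+1))| = r^(2*m+1) := by
    intro m; rw [abs_neg, abs_pow, abs_neg, abs_of_pos hr0]
  have hsdist : ∀ k : ℕ, |s k - 1| ≤ r^(2*k+1) / (1 - r^(2*k+1)) := by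
    intro k
    have hx : |(-(-r)^(2*k+1))| < 1 := by rw [habsx]; exact hrlt1 _ (by omega)
    have h := theta_dist (-r) (-(-r)^(2*k+1)) habs hx
    rw [habsx] at h
    exact h
  have hlow : ∀ m : ℕ, r + r^(2*m+1) ≤ 1 → 1 - r^(2*m) ≤ s m := by
    intro m hm
    have h1 := (abs_le.mp (hsdist m)).1
    have hden : (0:ℝ) < 1 - r^(2*m+1) := by linarith [hrlt1 (2*m+1) (by omega : 2*m+1 ≠ 0)]
    have h2 : r^(2*m+1)/(1 - r^(2*m+1)) ≤ r^(2*m) := by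
      rw [div_le_iff₀ hden]
      have h3 := mul_le_mul_of_nonneg_left hm (hrp (2*m)).le
      have e : r^(2*m)*r = r^(2*m+1) := by rw [pow_succ]
      have e2 : r^(2*m)*r^(2*m+1) = r^(4*m+1) := by rw [← pow_add]; congr 1; omega
      nlinarith
    linarith
  -- tail estimate
  have htail : ∀ k : ℕ, r + r^(2*k+1) ≤ 1 → A k ≤ s k ∧ s k ≤ A (k+1) := by
    intro k hc
    constructor
    · -- lower
      have h1 : A k ≤ 1 - r^(2*k) := by
        simp only [hAdef]
        exact div_le_self (by linarith [hrle1 (2*k)]) (by linarith [hrp (4*k+1)])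
      linarith [hlow k hc]
    · -- upper
      have hc' : r + r^(2*(k+1)+1) ≤ 1 := by
        have h4 : r^(2*(k+1)+1) ≤ r^(2*k+1) :=
          pow_le_pow_of_le_one hr0.le hr1.le (by omega)
        linarith
      have h5 : 1 - r^(2*k+2) ≤ s (k+1) := by
        have := hlow (k+1) hc'
        rwa [show 2*(k+1) = 2*k+2 by ring] at this
      have h6 : s k ≤ (1 - r^(2*k+2)) * (1 - r^(4*k+5)) := by
        rw [hsrec k]
        nlinarith [mul_le_mul_of_nonneg_left h5 (hrp (4*k+5)).le]
      have hd : (0:ℝ) < 1 + r^(4*k+5) := by linarith [hrp (4*k+5)]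
      have h7 : (1 - r^(2*k+2)) * (1 - r^(4*k+5)) ≤ A (k+1) := by
        rw [hA1 k, le_div_iff₀ hd]
        nlinarith [hrle1 (2*k+2), sq_nonneg (r^(4*k+5)), hrp (2*k+2), hrp (4*k+5)]
      linarith
  -- downward induction
  obtain ⟨K, hK⟩ : ∃ K : ℕ, r^(2*K+1) ≤ 1 - r := by
    obtain ⟨n, hn⟩ := exists_pow_lt_of_lt_one (by linarith : (0:ℝ) < 1 - r) hr1
    exact ⟨n, le_trans (pow_le_pow_of_le_one hr0.le hr1.le (by omega)) hn.le⟩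
  have hcond : ∀ k : ℕ, K ≤ k → r + r^(2*k+1) ≤ 1 := by
    intro k hk
    have : r^(2*k+1) ≤ r^(2*K+1) := pow_le_pow_of_le_one hr0.le hr1.le (by omega)
    linarith
  have hQ : ∀ d k : ℕ, K ≤ k + d → (A k ≤ s k ∧ s k ≤ A (k+1)) := by
    intro d
    induction d with
    | zero => intro k hk; exact htail k (hcond k (by omega))
    | succ d ih =>
      intro k hk
      by_cases hc : K ≤ k
      · exact htail k (hcond k hc)
      · have h2 := ih (k+1) (by omega)
        exact ⟨hstep_down k h2.2, hstep_up k h2.1⟩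
  have hQ1 : A 1 ≤ s 1 ∧ s 1 ≤ A 2 := hQ K 1 (by omega)
  -- base: s 0 > 0
  have hA2v : A 2 = (1 - r^4)/(1 + r^9) := by norm_num [hAdef]
  have hs0 : 0 < s 0 := by
    have h1 : s 0 = 1 - r^2 - r^5 * s 1 := by
      have h := hsrec 0
      norm_num at h; exact h
    have h2 : r^5 * s 1 ≤ r^5 * ((1 - r^4)/(1 + r^9)) := by
      apply mul_le_mul_of_nonneg_left _ (hrp 5).le
      rw [← hA2v]; exact hQ1.2
    have e8 : r^8 ≤ r := by
      calc r^8 ≤ r^1 := pow_le_pow_of_le_one hr0.le hr1.le (by omega)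
        _ = r := pow_one r
    have e9 : r^9 ≤ r^2 := pow_le_pow_of_le_one hr0.le hr1.le (by omega)
    have hQ2 : (0:ℝ) < 1+2*r+2*r^2+2*r^3+2*r^4+r^5-r^7-2*r^8-r^9 := by
      have := hrle1 7
      have := hrp 2
      have := hrp 3
      have := hrp 4
      have := hrp 5
      linarith
    have hsq : (0:ℝ) < (1-r)^2 := pow_pos (by linarith) 2
    have hid2 : (1-r^2)*(1+r^9) - r^5*(1-r^4)
        = (1-r)^2 * (1+2*r+2*r^2+2*r^3+2*r^4+r^5-r^7-2*r^8-r^9) := by ring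
    have h3 : r^5 * ((1 - r^4)/(1+r^9)) < 1 - r^2 := by
      rw [← mul_div_assoc, div_lt_iff₀ (by linarith [hrp 9] : (0:ℝ) < 1 + r^9)]
      nlinarith [mul_pos hsq hQ2]
    linarith
  -- value of theta at -1/q
  have hs0v : s 0 = theta (-r) r := by
    simp only [hsdef]; norm_num
  have hval : theta (-r) (-1 / -r) = (-r) * theta (-r) r := by
    have h1 := theta_funEq (-r) (-1 / -r) habs
    have e : (-r) * (-1 / -r) = -1 := by field_simp
    rw [e] at h1
    have h2 := hrec 0
    norm_num at h2
    -- h2 : theta (-r) (-1) = 1 + r * theta (-r) r (or some normal form)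
    rw [h1, h2]
    ring
  have hneg : theta (-r) (-1 / -r) < 0 := by
    rw [hval, ← hs0v]
    exact mul_neg_of_neg_of_pos (by linarith) hs0
  refine ⟨hneg, ?_⟩
  -- IVT
  have hM0 : (0:ℝ) < -1 / -r := by rw [neg_div_neg_eq]; positivity
  have hcont := theta_contOn (-r) (-1 / -r) habs hM0.le
  have hIVT := intermediate_value_Ioo' hM0.le hcont
  have h0mem : (0:ℝ) ∈ Ioo (theta (-r) (-1 / -r)) (theta (-r) 0) := by
    refine ⟨hneg, ?_⟩
    rw [theta_zero]; norm_num
  obtain ⟨x, hx, hfx⟩ := hIVT h0mem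
  exact ⟨x, hx, hfx⟩
end

section
/- For every real q with -1 < q < 0 and every real x with -1 ≤ x < 0, one has θ(q,x) > 0; in particular θ(q,·) has no zeros in the interval [-1, 0). -/
lemma aux_lt (r s : ℝ) (hr0 : 0 < r) (hr1 : r < 1) (hs0 : 0 < s) (hs1 : s ≤ 1)
    (a c b d : ℕ) (hac : a < c) (hbd : b ≤ d) : r ^ c * s ^ d < r ^ a * s ^ b := by
  calc r ^ c * s ^ d ≤ r ^ c * s ^ b := by
        apply mul_le_mul_of_nonneg_left _ (pow_nonneg hr0.le c)
        exact pow_le_pow_of_le_one hs0.le hs1 hbd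
    _ < r ^ a * s ^ b := by
        apply mul_lt_mul_of_pos_right _ (pow_pos hs0 b)
        exact pow_lt_pow_right_of_lt_one₀ hr0 hr1 hac

theorem stmt_12 (q : ℝ) (hq₁ : -1 < q) (hq₂ : q < 0) (x : ℝ)
    (hx₁ : -1 ≤ x) (hx₂ : x < 0) :
    0 < theta q x := by
  set f : ℕ → ℝ := fun j => q ^ (j * (j + 1) / 2) * x ^ j with hf
  have hr0 : (0:ℝ) < -q := by linarith
  have hr1 : -q < 1 := by linarith
  have hs0 : (0:ℝ) < -x := by linarith
  have hs1 : -x ≤ 1 := by linarith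
  -- summability
  have habs : ∀ j, |f j| ≤ (-q) ^ j := by
    intro j
    have h1 : |f j| = (-q) ^ (j * (j + 1) / 2) * (-x) ^ j := by
      rw [hf]; rw [abs_mul, abs_pow, abs_pow, abs_of_neg hq₂, abs_of_neg hx₂]
    rw [h1]
    have hj : j ≤ j * (j + 1) / 2 := by
      rcases Nat.eq_zero_or_pos j with h | h
      · simp [h]
      · have : j * 2 ≤ j * (j + 1) := by nlinarith
        omega
    calc (-q) ^ (j * (j + 1) / 2) * (-x) ^ j ≤ (-q) ^ (j * (j + 1) / 2) * 1 := by
          apply mul_le_mul_of_nonneg_left _ (pow_nonneg hr0.le _)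
          exact pow_le_one₀ hs0.le hs1
      _ = (-q) ^ (j * (j + 1) / 2) := mul_one _
      _ ≤ (-q) ^ j := pow_le_pow_of_le_one hr0.le hr1.le hj
  have hsummable : Summable f := by
    apply Summable.of_abs
    apply Summable.of_nonneg_of_le (fun j => abs_nonneg _) habs
    exact summable_geometric_of_lt_one hr0.le hr1
  have hS : HasSum f (theta q x) := hsummable.hasSum
  -- regroup in blocks of 4
  replace hS := (Nat.divModEquiv 4).symm.hasSum_iff.mpr hS
  dsimp [Function.comp_def] at hS
  set g : ℕ → ℝ := fun k => ∑ i : Fin 4, f (k * 4 + (i : ℕ)) with hg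
  have hS' : HasSum g (theta q x) := hS.prod_fiberwise fun k => hasSum_fintype _
  -- each block is positive
  have hgpos : ∀ k, 0 < g k := by
    intro k
    have he0 : (4 * k) * (4 * k + 1) / 2 = 8 * k ^ 2 + 2 * k := by
      have : 4 * k * (4 * k + 1) = 2 * (8 * k ^ 2 + 2 * k) := by ring
      omega
    have he1 : (4 * k + 1) * (4 * k + 1 + 1) / 2 = 8 * k ^ 2 + 6 * k + 1 := by
      have : (4 * k + 1) * (4 * k + 1 + 1) = 2 * (8 * k ^ 2 + 6 * k + 1) := by ring
      omega
    have he2 : (4 * k + 2) * (4 * k + 2 + 1) / 2 = 8 * k ^ 2 + 10 * k + 3 := by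
      have : (4 * k + 2) * (4 * k + 2 + 1) = 2 * (8 * k ^ 2 + 10 * k + 3) := by ring
      omega
    have he3 : (4 * k + 3) * (4 * k + 3 + 1) / 2 = 8 * k ^ 2 + 14 * k + 6 := by
      have : (4 * k + 3) * (4 * k + 3 + 1) = 2 * (8 * k ^ 2 + 14 * k + 6) := by ring
      omega
    have key : ∀ a b : ℕ, q ^ a * x ^ b = (-1:ℝ) ^ (a + b) * ((-q) ^ a * (-x) ^ b) := by
      intro a b
      rw [pow_add, mul_mul_mul_comm, ← mul_pow, ← mul_pow, neg_one_mul, neg_one_mul,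
        neg_neg, neg_neg]
    have hgk : g k = ((-q) ^ (8 * k ^ 2 + 2 * k) * (-x) ^ (4 * k)
        - (-q) ^ (8 * k ^ 2 + 10 * k + 3) * (-x) ^ (4 * k + 2))
        + ((-q) ^ (8 * k ^ 2 + 6 * k + 1) * (-x) ^ (4 * k + 1)
        - (-q) ^ (8 * k ^ 2 + 14 * k + 6) * (-x) ^ (4 * k + 3)) := by
      rw [hg]
      simp only [Fin.sum_univ_four, hf]
      have e0 : k * 4 + ((0 : Fin 4) : ℕ) = 4 * k := by
        rw [show ((0 : Fin 4) : ℕ) = 0 from rfl]; omega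
      have e1 : k * 4 + ((1 : Fin 4) : ℕ) = 4 * k + 1 := by
        rw [show ((1 : Fin 4) : ℕ) = 1 from rfl]; omega
      have e2 : k * 4 + ((2 : Fin 4) : ℕ) = 4 * k + 2 := by
        rw [show ((2 : Fin 4) : ℕ) = 2 from rfl]; omega
      have e3 : k * 4 + ((3 : Fin 4) : ℕ) = 4 * k + 3 := by
        rw [show ((3 : Fin 4) : ℕ) = 3 from rfl]; omega
      rw [e0, e1, e2, e3, he0, he1, he2, he3, key, key, key, key]
      rw [(Even.neg_one_pow (n := 8 * k ^ 2 + 2 * k + 4 * k) ⟨4 * k ^ 2 + 3 * k, by ring⟩ : ((-1:ℝ)) ^ _ = 1)]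
      rw [(Even.neg_one_pow (n := 8 * k ^ 2 + 6 * k + 1 + (4 * k + 1)) ⟨4 * k ^ 2 + 5 * k + 1, by ring⟩ : ((-1:ℝ)) ^ _ = 1)]
      rw [(Odd.neg_one_pow (n := 8 * k ^ 2 + 10 * k + 3 + (4 * k + 2)) ⟨4 * k ^ 2 + 7 * k + 2, by ring⟩ : ((-1:ℝ)) ^ _ = -1)]
      rw [(Odd.neg_one_pow (n := 8 * k ^ 2 + 14 * k + 6 + (4 * k + 3)) ⟨4 * k ^ 2 + 9 * k + 4, by ring⟩ : ((-1:ℝ)) ^ _ = -1)]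
      ring
    rw [hgk]
    have h1 : (-q) ^ (8 * k ^ 2 + 10 * k + 3) * (-x) ^ (4 * k + 2)
        < (-q) ^ (8 * k ^ 2 + 2 * k) * (-x) ^ (4 * k) :=
      aux_lt _ _ hr0 hr1 hs0 hs1 _ _ _ _ (by omega) (by omega)
    have h2 : (-q) ^ (8 * k ^ 2 + 14 * k + 6) * (-x) ^ (4 * k + 3)
        < (-q) ^ (8 * k ^ 2 + 6 * k + 1) * (-x) ^ (4 * k + 1) :=
      aux_lt _ _ hr0 hr1 hs0 hs1 _ _ _ _ (by omega) (by omega)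
    linarith
  calc (0:ℝ) < g 0 := hgpos 0
    _ ≤ theta q x := le_hasSum hS' 0 fun j _ => (hgpos j).le
end
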